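/- arXiv:2010.16291 — 2 statements merged into one kernel-verified Lean document; each statement's English description precedes it below -/
import Mathlib

section
/- Let $d \geq 2$ be an integer and let $h' : S \to \mathbb{R}$ be a function on a set $S$ with a bijection $f : S \to S$. Suppose that for all $z \in S$, $\frac{1}{d}h'(f(z)) + \frac{1}{d}h'(f^{-1}(z)) \geq (1 + \frac{1}{d^2}) h'(z)$. Then for every $k \geq 0$ and every $z \in S$, $\frac{1}{d^{2^k}} h'(f^{2^k}(z)) + \frac{1}{d^{2^k}} h'(f^{-2^k}(z)) \geq (1 + \frac{1}{d^{2^{k+1}}}) h'(z)$. -/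
theorem stmt_0 {S : Type*} (d : ℕ) (hd : 2 ≤ d) (f : Equiv S S) (h' : S → ℝ)
    (H : ∀ z : S, (1 / (d : ℝ)) * h' (f z) + (1 / (d : ℝ)) * h' (f.symm z) ≥
      (1 + 1 / (d : ℝ) ^ 2) * h' z) :
    ∀ (k : ℕ) (z : S),
      (1 / (d : ℝ) ^ (2 ^ k)) * h' ((f : S → S)^[2 ^ k] z) +
        (1 / (d : ℝ) ^ (2 ^ k)) * h' ((f.symm : S → S)^[2 ^ k] z) ≥
      (1 + 1 / (d : ℝ) ^ (2 ^ (k + 1))) * h' z := by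
  have hdpos : (0:ℝ) < (d:ℝ) := by exact_mod_cast Nat.pos_of_ne_zero (by omega)
  intro k
  induction k with
  | zero =>
    intro z
    simpa using H z
  | succ k ih =>
    intro z
    have hdk : (0:ℝ) < (d:ℝ) ^ (2 ^ k) := by positivity
    have h1 := ih ((f : S → S)^[2 ^ k] z)
    have h2 := ih ((f.symm : S → S)^[2 ^ k] z)
    have h3 := ih z
    have hfix : (f : S → S)^[2 ^ k] ((f.symm : S → S)^[2 ^ k] z) = z :=
      (Function.LeftInverse.iterate f.apply_symm_apply (2 ^ k)) z
    have hfix2 : (f.symm : S → S)^[2 ^ k] ((f : S → S)^[2 ^ k] z) = z :=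
      (Function.LeftInverse.iterate f.symm_apply_apply (2 ^ k)) z
    rw [hfix2] at h1
    rw [hfix] at h2
    have e1 : (f : S → S)^[2 ^ (k + 1)] z =
        (f : S → S)^[2 ^ k] ((f : S → S)^[2 ^ k] z) := by
      rw [pow_succ, show 2 ^ k * 2 = 2 ^ k + 2 ^ k by ring, Function.iterate_add_apply]
    have e2 : (f.symm : S → S)^[2 ^ (k + 1)] z =
        (f.symm : S → S)^[2 ^ k] ((f.symm : S → S)^[2 ^ k] z) := by
      rw [pow_succ, show 2 ^ k * 2 = 2 ^ k + 2 ^ k by ring, Function.iterate_add_apply]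
    have e3 : ((d:ℝ)) ^ (2 ^ (k + 1)) = ((d:ℝ) ^ (2 ^ k)) ^ 2 := by
      rw [← pow_mul, pow_succ, mul_comm]
    have e4 : ((d:ℝ)) ^ (2 ^ (k + 1 + 1)) = ((d:ℝ) ^ (2 ^ k)) ^ 4 := by
      rw [← pow_mul]
      congr 1
      ring
    rw [e1, e2, e3, e4]
    set c : ℝ := 1 / (d:ℝ) ^ (2 ^ k) with hc
    have hcpos : 0 < c := by positivity
    rw [e3] at h1 h2 h3
    have hc2 : 1 / ((d:ℝ) ^ (2 ^ k)) ^ 2 = c ^ 2 := by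
      rw [hc]; ring
    have hc4 : 1 / ((d:ℝ) ^ (2 ^ k)) ^ 4 = c ^ 4 := by
      rw [hc]
      field_simp
    rw [hc2] at h1 h2 h3
    rw [hc4, hc2]
    nlinarith [mul_le_mul_of_nonneg_left (add_le_add h1.le h2.le) hcpos.le,
      mul_le_mul_of_nonneg_left h3 (by positivity : (0:ℝ) ≤ 1 + c^2), sq_nonneg c,
      hcpos]
end

section
/- Let $d \geq 2$ be an integer, $f : S \to S$ a bijection of a set $S$, and $h : S \to \mathbb{R}$ a function. Suppose there exists $C' > 0$ such that for all $z \in S$, $\frac{1}{d}h(f(z)) + \frac{1}{d}h(f^{-1}(z)) - (1+\frac{1}{d^2})h(z) \geq -C'$. Suppose moreover that for every $z$, the limits $\widehat{h}^+(z) := \lim_{n\to\infty} d^{-n} h(f^n(z))$ and $\widehat{h}^-(z) := \lim_{n\to\infty} d^{-n} h(f^{-n}(z))$ exist. Then $\widehat{h}^+(z) + \widehat{h}^-(z) \geq h(z) - \frac{d^2}{(d-1)^2} C'$ for all $z \in S$. -/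
/-!
Put `h' := h - K` with `K = d² C' / (d - 1)²`; the constant is chosen so that the defect `-C'`
is absorbed and `h' (f z) + h' (f⁻¹ z) ≥ (d + d⁻¹) h' z`. Along a one-sided orbit `t n` this
recurrence, whose characteristic roots are `d` and `d⁻¹`, says that
`t (n + 1) - d⁻¹ t n ≥ dⁿ (t 1 - d⁻¹ t 0)`; dividing by `dⁿ` and letting `n → ∞` bounds
`(d - d⁻¹)` times the limit of `t n / dⁿ` from below. Adding the bounds for the forward and the
backward orbit of `z` and using the recurrence once more at `z` gives `ĥ⁺ z + ĥ⁻ z ≥ h' z`.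
-/

open Filter

lemma pow_mul_le_sub_inv_mul_of_recurrence {a : ℝ} (ha : 0 < a) {t : ℕ → ℝ}
    (hrec : ∀ n, (a + a⁻¹) * t (n + 1) ≤ t (n + 2) + t n) (n : ℕ) :
    a ^ n * (t 1 - a⁻¹ * t 0) ≤ t (n + 1) - a⁻¹ * t n := by
  induction n with
  | zero => simp
  | succ n ih =>
    have step : a * (t (n + 1) - a⁻¹ * t n) ≤ t (n + 2) - a⁻¹ * t (n + 1) :=
      calc a * (t (n + 1) - a⁻¹ * t n) = (a + a⁻¹) * t (n + 1) - t n - a⁻¹ * t (n + 1) := by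
            field_simp; ring
        _ ≤ _ := by linarith [hrec n]
    calc a ^ (n + 1) * (t 1 - a⁻¹ * t 0) = a * (a ^ n * (t 1 - a⁻¹ * t 0)) := by ring
      _ ≤ a * (t (n + 1) - a⁻¹ * t n) := mul_le_mul_of_nonneg_left ih ha.le
      _ ≤ _ := step

lemma sub_inv_mul_le_of_recurrence_of_tendsto {a : ℝ} (ha : 0 < a) {t : ℕ → ℝ}
    (hrec : ∀ n, (a + a⁻¹) * t (n + 1) ≤ t (n + 2) + t n) {L : ℝ}
    (hL : Tendsto (fun n => t n / a ^ n) atTop (nhds L)) :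
    t 1 - a⁻¹ * t 0 ≤ (a - a⁻¹) * L := by
  have hshift : Tendsto (fun n => t (n + 1) / a ^ (n + 1)) atTop (nhds L) :=
    hL.comp (tendsto_add_atTop_nat 1)
  have hlim : Tendsto (fun n => (t (n + 1) - a⁻¹ * t n) / a ^ n) atTop
      (nhds ((a - a⁻¹) * L)) := by
    rw [sub_mul]
    refine ((hshift.const_mul a).sub (hL.const_mul a⁻¹)).congr fun n => ?_
    field_simp
    ring
  refine ge_of_tendsto' hlim fun n => ?_
  rw [le_div_iff₀ (pow_pos ha n), mul_comm]
  exact pow_mul_le_sub_inv_mul_of_recurrence ha hrec n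

lemma tendsto_sub_const_div_pow {a : ℝ} (ha : 1 < a) {u : ℕ → ℝ} {L : ℝ}
    (hu : Tendsto (fun n => u n / a ^ n) atTop (nhds L)) (K : ℝ) :
    Tendsto (fun n => (u n - K) / a ^ n) atTop (nhds L) := by
  have hK : Tendsto (fun n : ℕ => K * a⁻¹ ^ n) atTop (nhds 0) := by
    simpa using (tendsto_pow_atTop_nhds_zero_of_lt_one (by positivity)
      (inv_lt_one_of_one_lt₀ ha)).const_mul K
  refine (sub_zero L ▸ hu.sub hK).congr fun n => ?_
  rw [sub_div, inv_pow, div_eq_mul_inv K]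

namespace Equiv

variable {S : Type*} (f : Equiv S S) {g : S → ℝ} {c : ℝ}

lemma iterate_recurrence_of_le_add_symm (hg : ∀ w, c * g w ≤ g (f w) + g (f.symm w))
    (z : S) (n : ℕ) : c * g (f^[n + 1] z) ≤ g (f^[n + 2] z) + g (f^[n] z) := by
  have hsymm : f.symm (f^[n + 1] z) = f^[n] z := by
    rw [Function.iterate_succ_apply', symm_apply_apply]
  simpa only [hsymm, ← Function.iterate_succ_apply' f (n + 1)] using hg (f^[n + 1] z)

lemma le_add_of_le_add_symm_of_tendsto {a : ℝ} (ha : 1 < a)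
    (hg : ∀ w, (a + a⁻¹) * g w ≤ g (f w) + g (f.symm w)) {Lp Lm : S → ℝ}
    (hp : ∀ z, Tendsto (fun n => g (f^[n] z) / a ^ n) atTop (nhds (Lp z)))
    (hm : ∀ z, Tendsto (fun n => g (f.symm^[n] z) / a ^ n) atTop (nhds (Lm z))) (z : S) :
    g z ≤ Lp z + Lm z := by
  have ha0 : 0 < a := one_pos.trans ha
  have hg' : ∀ w, (a + a⁻¹) * g w ≤ g (f.symm w) + g (f.symm.symm w) :=
    fun w => (hg w).trans_eq (add_comm _ _)
  have forward := sub_inv_mul_le_of_recurrence_of_tendsto ha0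
    (f.iterate_recurrence_of_le_add_symm hg z) (hp z)
  have backward := sub_inv_mul_le_of_recurrence_of_tendsto ha0
    (f.symm.iterate_recurrence_of_le_add_symm hg' z) (hm z)
  simp only [Function.iterate_one, Function.iterate_zero, id] at forward backward
  have hpos : 0 < a - a⁻¹ := sub_pos.2 ((inv_lt_one_of_one_lt₀ ha).trans ha)
  refine le_of_mul_le_mul_left ?_ hpos
  linarith [hg z]

end Equiv

lemma mul_sub_le_add_sub_of_ge_neg {a : ℝ} (ha : 1 < a) {x y w C : ℝ}
    (H : 1 / a * x + 1 / a * y - (1 + 1 / a ^ 2) * w ≥ -C) :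
    (a + a⁻¹) * (w - a ^ 2 / (a - 1) ^ 2 * C) ≤
      (x - a ^ 2 / (a - 1) ^ 2 * C) + (y - a ^ 2 / (a - 1) ^ 2 * C) := by
  have ha0 : 0 < a := one_pos.trans ha
  have hscaled : x + y - (a + a⁻¹) * w ≥ -(a * C) := by
    have := mul_le_mul_of_nonneg_left H ha0.le
    field_simp at this ⊢
    linarith
  have habsorb : (a + a⁻¹ - 2) * (a ^ 2 / (a - 1) ^ 2 * C) = a * C := by
    have : a - 1 ≠ 0 := sub_ne_zero.2 ha.ne'
    field_simp
    ring
  linarith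

theorem stmt_1_general {S : Type*} (d : ℕ) (hd : 2 ≤ d) (f : Equiv S S) (h : S → ℝ)
    (C' : ℝ)
    (H : ∀ z : S, (1 / (d : ℝ)) * h (f z) + (1 / (d : ℝ)) * h (f.symm z) -
      (1 + 1 / (d : ℝ) ^ 2) * h z ≥ -C')
    (hplus hminus : S → ℝ)
    (hlimp : ∀ z : S, Tendsto (fun n : ℕ => h ((f : S → S)^[n] z) / (d : ℝ) ^ n)
      atTop (nhds (hplus z)))
    (hlimm : ∀ z : S, Tendsto (fun n : ℕ => h ((f.symm : S → S)^[n] z) / (d : ℝ) ^ n)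
      atTop (nhds (hminus z))) :
    ∀ z : S, hplus z + hminus z ≥ h z - (d : ℝ) ^ 2 / ((d : ℝ) - 1) ^ 2 * C' := by
  have hd1 : (1 : ℝ) < d := by exact_mod_cast hd
  set K := (d : ℝ) ^ 2 / ((d : ℝ) - 1) ^ 2 * C'
  exact f.le_add_of_le_add_symm_of_tendsto (g := fun w => h w - K) hd1
    (fun w => mul_sub_le_add_sub_of_ge_neg hd1 (H w))
    (fun z => tendsto_sub_const_div_pow hd1 (hlimp z) K)
    (fun z => tendsto_sub_const_div_pow hd1 (hlimm z) K)

theorem stmt_1 {S : Type*} (d : ℕ) (hd : 2 ≤ d) (f : Equiv S S) (h : S → ℝ)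
    (C' : ℝ) (hC' : 0 < C')
    (H : ∀ z : S, (1 / (d : ℝ)) * h (f z) + (1 / (d : ℝ)) * h (f.symm z) -
      (1 + 1 / (d : ℝ) ^ 2) * h z ≥ -C')
    (hplus hminus : S → ℝ)
    (hlimp : ∀ z : S, Tendsto (fun n : ℕ => h ((f : S → S)^[n] z) / (d : ℝ) ^ n)
      atTop (nhds (hplus z)))
    (hlimm : ∀ z : S, Tendsto (fun n : ℕ => h ((f.symm : S → S)^[n] z) / (d : ℝ) ^ n)
      atTop (nhds (hminus z))) :
    ∀ z : S, hplus z + hminus z ≥ h z - (d : ℝ) ^ 2 / ((d : ℝ) - 1) ^ 2 * C' :=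
  stmt_1_general d hd f h C' H hplus hminus hlimp hlimm
end
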